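/- Let K ≥ 1, L > 0, and let (Z_k^n)_{n∈[K],k∈[K]} be jointly distributed finitely-valued random variables such that for every n ∈ [K] the family (Z_1^n, …, Z_K^n) is (K,n)-MDS with symbol size L. Write Z_k^{≤n} = (Z_k^1, …, Z_k^n). Then for every n ∈ [K] and every subset U ⊆ [K] with |U| = n: (1/n)·Σ_{k∈U} H(Z_k^{≤n}) ≥ (1 + 1/2 + ⋯ + 1/n)·L. -/

import Mathlib

open scoped BigOperators

open Classical in
/-- The probability that the finitely-valued random variable `X` takes the value `s`,
under the probability weights `μ` on the finite sample space `Ω`. -/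
noncomputable def probOf {Ω S : Type*} [Fintype Ω] (μ : Ω → ℝ) (X : Ω → S) (s : S) : ℝ :=
  ∑ ω ∈ Finset.univ.filter (fun ω => X ω = s), μ ω

/-- Shannon entropy (in bits) of a finitely-valued random variable. -/
noncomputable def Hent {Ω S : Type*} [Fintype Ω] [Fintype S] (μ : Ω → ℝ) (X : Ω → S) : ℝ :=
  - ∑ s : S, probOf μ X s * Real.logb 2 (probOf μ X s)

/-- Conditional entropy H(X | Y) (in bits). -/
noncomputable def Hcond {Ω S T : Type*} [Fintype Ω] [Fintype S] [Fintype T]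
    (μ : Ω → ℝ) (X : Ω → S) (Y : Ω → T) : ℝ :=
  Hent μ (fun ω => (X ω, Y ω)) - Hent μ Y

/-- Mutual information I(X ; Y) (in bits). -/
noncomputable def MI {Ω S T : Type*} [Fintype Ω] [Fintype S] [Fintype T]
    (μ : Ω → ℝ) (X : Ω → S) (Y : Ω → T) : ℝ :=
  Hent μ X + Hent μ Y - Hent μ (fun ω => (X ω, Y ω))

/-- Conditional mutual information I(X ; Y | Z) (in bits). -/
noncomputable def CMI {Ω S T U : Type*} [Fintype Ω] [Fintype S] [Fintype T] [Fintype U]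
    (μ : Ω → ℝ) (X : Ω → S) (Y : Ω → T) (Z : Ω → U) : ℝ :=
  Hcond μ X Z - Hcond μ X (fun ω => (Y ω, Z ω))

/-- `Zle ZM n k` is the tuple `Z_k^{≤ n} = (Z_k^1, …, Z_k^n)` (0-indexed: levels `0,…,n`). -/
def Zle {Ω T : Type*} {K : ℕ} (ZM : Fin K → Fin K → Ω → T) (n k : Fin K) :
    Ω → (Fin (n.1 + 1) → T) :=
  fun ω m => ZM (Fin.castLE n.isLt m) k ω

/-!
Entropy is monotone and submodular (Gibbs' inequality against `p(x,z) p(y,z) / p(z)`), so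
`P ↦ H(Z_P)`, on finite sets `P` of (level, user) pairs, is a polymatroid; besides this only the
MDS values `H(Z^i_V) = min(|V|, i) L` enter. For `|U| = n` put
`f_n(U) = ∑_{k ∈ U} H(Z_k^{≤n}) - H(Z_U^{≤n})`; we show `f_n(U) ≥ n (H_n - 1) L` by induction.
Let `|U| = n + 1`. Up to level `n` any `n` users determine the remaining one, so
`H(Z_U^{≤n}) = H(Z_{U∖k}^{≤n})`, and averaging the bound for `f_n(U ∖ k)` over `k ∈ U` gives
`∑_{k ∈ U} H(Z_k^{≤n}) - H(Z_U^{≤n}) ≥ H(Z_U^{≤n}) / n + (n + 1)(H_n - 1) L`, which is at least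
`(n + 1)(H_{n+1} - 1) L` because `H(Z_U^{≤n}) ≥ H(Z_U^n) = n L`. Passing to level `n + 1` can
only increase this, since by submodularity the joint increment `H(Z_U^{≤n+1}) - H(Z_U^{≤n})` is
at most the sum of the individual increments. Finally
`∑_{k ∈ U} H(Z_k^{≤n}) = f_n(U) + H(Z_U^{≤n}) ≥ n H_n L`.
-/

open Finset

lemma sum_mul_logb_le_sum_mul_logb_self {α : Type*} [Fintype α] {p q : α → ℝ}
    (hp : ∀ a, 0 ≤ p a) (hq : ∀ a, 0 ≤ q a) (hpq : ∀ a, 0 < p a → 0 < q a)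
    (hsum : ∑ a, q a ≤ ∑ a, p a) :
    ∑ a, p a * Real.logb 2 (q a) ≤ ∑ a, p a * Real.logb 2 (p a) := by
  have hlog2 : 0 < Real.log 2 := Real.log_pos one_lt_two
  have key : ∀ a, p a * Real.logb 2 (q a) ≤ p a * Real.logb 2 (p a) + (q a - p a) / Real.log 2 := by
    intro a
    rcases (hp a).eq_or_lt with h | h
    · simpa [← h] using div_nonneg (hq a) hlog2.le
    · have hqa := hpq a h
      have hlog : p a * (Real.log (q a) - Real.log (p a)) ≤ q a - p a := by
        calc p a * (Real.log (q a) - Real.log (p a)) = p a * Real.log (q a / p a) := by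
              rw [Real.log_div hqa.ne' h.ne']
          _ ≤ p a * (q a / p a - 1) :=
              mul_le_mul_of_nonneg_left (Real.log_le_sub_one_of_pos (div_pos hqa h)) h.le
          _ = q a - p a := by field_simp
      have hsub : p a * Real.logb 2 (q a) - p a * Real.logb 2 (p a)
          = p a * (Real.log (q a) - Real.log (p a)) / Real.log 2 := by
        simp only [Real.logb]
        ring
      rw [← sub_le_iff_le_add', hsub]
      exact div_le_div_of_nonneg_right hlog hlog2.le
  calc ∑ a, p a * Real.logb 2 (q a)
      ≤ ∑ a, (p a * Real.logb 2 (p a) + (q a - p a) / Real.log 2) := sum_le_sum fun a _ => key a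
    _ = ∑ a, p a * Real.logb 2 (p a) + (∑ a, q a - ∑ a, p a) / Real.log 2 := by
        rw [sum_add_distrib, ← sum_sub_distrib, sum_div]
    _ ≤ ∑ a, p a * Real.logb 2 (p a) :=
        add_le_of_nonpos_right (div_nonpos_of_nonpos_of_nonneg (by linarith) hlog2.le)

section Entropy

variable {Ω : Type*} [Fintype Ω] {μ : Ω → ℝ}

lemma probOf_nonneg (hμ : ∀ ω, 0 ≤ μ ω) {S : Type*} (X : Ω → S) (s : S) :
    0 ≤ probOf μ X s :=
  sum_nonneg fun ω _ => hμ ω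

lemma le_probOf_apply (hμ : ∀ ω, 0 ≤ μ ω) {S : Type*} (X : Ω → S) (ω : Ω) :
    μ ω ≤ probOf μ X (X ω) := by
  classical
  exact single_le_sum (fun ω _ => hμ ω) (by simp)

lemma probOf_le_probOf_of_eq_comp (hμ : ∀ ω, 0 ≤ μ ω) {S S' : Type*} {X : Ω → S} {Y : Ω → S'}
    {f : S' → S} (hf : ∀ ω, X ω = f (Y ω)) (t : S') :
    probOf μ Y t ≤ probOf μ X (f t) := by
  classical
  refine sum_le_sum_of_subset_of_nonneg (fun ω hω => ?_) fun ω _ _ => hμ ω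
  simp_all

lemma sum_mul_comp_eq_sum_probOf_mul {S : Type*} [Fintype S] (X : Ω → S) (g : S → ℝ) :
    ∑ ω, μ ω * g (X ω) = ∑ s, probOf μ X s * g s := by
  classical
  rw [← sum_fiberwise univ X]
  refine sum_congr rfl fun s _ => ?_
  rw [probOf, sum_mul]
  exact sum_congr rfl fun ω hω => by rw [(mem_filter.mp hω).2]

lemma sum_probOf {S : Type*} [Fintype S] (X : Ω → S) : ∑ s, probOf μ X s = ∑ ω, μ ω := by
  simpa using (sum_mul_comp_eq_sum_probOf_mul (μ := μ) X fun _ => 1).symm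

lemma sum_probOf_prod_fst {S S' : Type*} [Fintype S] (X : Ω → S) (Y : Ω → S') (t : S') :
    ∑ s, probOf μ (fun ω => (X ω, Y ω)) (s, t) = probOf μ Y t := by
  classical
  rw [probOf, ← sum_fiberwise (univ.filter fun ω => Y ω = t) X μ]
  refine sum_congr rfl fun s _ => sum_congr ?_ fun _ _ => rfl
  ext ω
  simp [Prod.ext_iff, and_comm]

lemma Hent_eq_neg_sum_mul_logb_probOf_apply {S : Type*} [Fintype S] (X : Ω → S) :
    Hent μ X = -∑ ω, μ ω * Real.logb 2 (probOf μ X (X ω)) := by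
  rw [Hent, sum_mul_comp_eq_sum_probOf_mul X fun s => Real.logb 2 (probOf μ X s)]

lemma Hent_le_of_eq_comp (hμ : ∀ ω, 0 ≤ μ ω) {S S' : Type*} [Fintype S] [Fintype S']
    {X : Ω → S} {Y : Ω → S'} {f : S' → S} (hf : ∀ ω, X ω = f (Y ω)) :
    Hent μ X ≤ Hent μ Y := by
  rw [Hent_eq_neg_sum_mul_logb_probOf_apply X, Hent_eq_neg_sum_mul_logb_probOf_apply Y,
    neg_le_neg_iff]
  refine sum_le_sum fun ω _ => ?_
  rcases (hμ ω).eq_or_lt with h | h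
  · simp [← h]
  · have hY := h.trans_le (le_probOf_apply hμ Y ω)
    have hXY : probOf μ Y (Y ω) ≤ probOf μ X (X ω) := hf ω ▸ probOf_le_probOf_of_eq_comp hμ hf (Y ω)
    exact mul_le_mul_of_nonneg_left (Real.logb_le_logb_of_le one_lt_two hY hXY) h.le

lemma Hent_eq_of_eq_comp (hμ : ∀ ω, 0 ≤ μ ω) {S S' : Type*} [Fintype S] [Fintype S']
    {X : Ω → S} {Y : Ω → S'} {f : S' → S} {g : S → S'} (hf : ∀ ω, X ω = f (Y ω))
    (hg : ∀ ω, Y ω = g (X ω)) :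
    Hent μ X = Hent μ Y :=
  (Hent_le_of_eq_comp hμ hf).antisymm (Hent_le_of_eq_comp hμ hg)

lemma sum_probOf_mul_probOf_div_probOf {A B C : Type*} [Fintype A] [Fintype B] [Fintype C]
    (X : Ω → A) (Y : Ω → B) (Z : Ω → C) :
    ∑ s : A × B × C, probOf μ (fun ω => (X ω, Z ω)) (s.1, s.2.2)
        * probOf μ (fun ω => (Y ω, Z ω)) (s.2.1, s.2.2) / probOf μ Z s.2.2 = ∑ ω, μ ω := by
  calc _ = ∑ c, (∑ a, probOf μ (fun ω => (X ω, Z ω)) (a, c))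
          * (∑ b, probOf μ (fun ω => (Y ω, Z ω)) (b, c)) / probOf μ Z c := by
        simp only [Fintype.sum_prod_type, sum_mul_sum, sum_div]
        exact (sum_congr rfl fun _ _ => sum_comm).trans sum_comm
    _ = ∑ c, probOf μ Z c := by simp only [sum_probOf_prod_fst, mul_self_div_self]
    _ = ∑ ω, μ ω := sum_probOf Z

lemma Hent_eq_neg_sum_probOf_mul_logb_of_eq_comp {S S' : Type*} [Fintype S] [Fintype S']
    {V : Ω → S} {W : Ω → S'} {f : S' → S} (hf : ∀ ω, V ω = f (W ω)) :
    Hent μ V = -∑ s, probOf μ W s * Real.logb 2 (probOf μ V (f s)) := by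
  rw [Hent_eq_neg_sum_mul_logb_probOf_apply, ← sum_mul_comp_eq_sum_probOf_mul W
    fun s => Real.logb 2 (probOf μ V (f s))]
  simp only [hf]

theorem Hent_submodular (hμ : ∀ ω, 0 ≤ μ ω) {A B C : Type*} [Fintype A] [Fintype B] [Fintype C]
    (X : Ω → A) (Y : Ω → B) (Z : Ω → C) :
    Hent μ (fun ω => (X ω, Y ω, Z ω)) + Hent μ Z
      ≤ Hent μ (fun ω => (X ω, Z ω)) + Hent μ (fun ω => (Y ω, Z ω)) := by
  set W : Ω → A × B × C := fun ω => (X ω, Y ω, Z ω)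
  set p : A × B × C → ℝ := probOf μ W
  set pXZ : A × B × C → ℝ := fun s => probOf μ (fun ω => (X ω, Z ω)) (s.1, s.2.2)
  set pYZ : A × B × C → ℝ := fun s => probOf μ (fun ω => (Y ω, Z ω)) (s.2.1, s.2.2)
  set pZ : A × B × C → ℝ := fun s => probOf μ Z s.2.2
  have hW : Hent μ W = -∑ s, p s * Real.logb 2 (p s) :=
    Hent_eq_neg_sum_probOf_mul_logb_of_eq_comp (f := id) fun _ => rfl
  have hZ : Hent μ Z = -∑ s, p s * Real.logb 2 (pZ s) :=
    Hent_eq_neg_sum_probOf_mul_logb_of_eq_comp (W := W) fun _ => rfl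
  have hXZ : Hent μ (fun ω => (X ω, Z ω)) = -∑ s, p s * Real.logb 2 (pXZ s) :=
    Hent_eq_neg_sum_probOf_mul_logb_of_eq_comp (W := W) fun _ => rfl
  have hYZ : Hent μ (fun ω => (Y ω, Z ω)) = -∑ s, p s * Real.logb 2 (pYZ s) :=
    Hent_eq_neg_sum_probOf_mul_logb_of_eq_comp (W := W) fun _ => rfl
  have hpos : ∀ s, 0 < p s → 0 < pXZ s ∧ 0 < pYZ s ∧ 0 < pZ s := fun s hs =>
    ⟨hs.trans_le (probOf_le_probOf_of_eq_comp hμ (f := fun s => (s.1, s.2.2)) (fun _ => rfl) s),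
      hs.trans_le (probOf_le_probOf_of_eq_comp hμ (f := fun s => (s.2.1, s.2.2)) (fun _ => rfl) s),
      hs.trans_le (probOf_le_probOf_of_eq_comp hμ (f := fun s => s.2.2) (fun _ => rfl) s)⟩
  have hgibbs := sum_mul_logb_le_sum_mul_logb_self (p := p) (q := fun s => pXZ s * pYZ s / pZ s)
    (probOf_nonneg hμ W)
    (fun s => div_nonneg (mul_nonneg (probOf_nonneg hμ _ _) (probOf_nonneg hμ _ _))
      (probOf_nonneg hμ _ _))
    (fun s hs => have h := hpos s hs; div_pos (mul_pos h.1 h.2.1) h.2.2)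
    (by rw [sum_probOf_mul_probOf_div_probOf, sum_probOf])
  have hsplit : ∀ s, p s * Real.logb 2 (pXZ s * pYZ s / pZ s)
      = p s * Real.logb 2 (pXZ s) + p s * Real.logb 2 (pYZ s) - p s * Real.logb 2 (pZ s) := by
    intro s
    rcases (probOf_nonneg hμ W s).eq_or_lt with h | h
    · simp [p, ← h]
    · obtain ⟨h1, h2, h3⟩ := hpos s h
      rw [Real.logb_div (mul_pos h1 h2).ne' h3.ne', Real.logb_mul h1.ne' h2.ne']
      ring
  simp only [hsplit, sum_sub_distrib, sum_add_distrib] at hgibbs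
  rw [hW, hZ, hXZ, hYZ]
  linarith

end Entropy

def IsSubmodular {α : Type*} [DecidableEq α] (h : Finset α → ℝ) : Prop :=
  ∀ P Q, h (P ∪ Q) + h (P ∩ Q) ≤ h P + h Q

def subfamily {ι Ω T : Type*} (Z : ι → Ω → T) (P : Finset ι) : Ω → (P → T) :=
  fun ω p => Z p ω

section Subfamily

variable {ι Ω T : Type*} [DecidableEq ι] [Fintype Ω] [Fintype T] {μ : Ω → ℝ}

lemma Hent_subfamily_mono (hμ : ∀ ω, 0 ≤ μ ω) (Z : ι → Ω → T) :
    Monotone fun P => Hent μ (subfamily Z P) :=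
  fun _ _ hPQ => Hent_le_of_eq_comp hμ (f := fun v p => v ⟨p, hPQ p.2⟩) fun _ => rfl

lemma Hent_subfamily_submodular (hμ : ∀ ω, 0 ≤ μ ω) (Z : ι → Ω → T) :
    IsSubmodular fun P => Hent μ (subfamily Z P) := by
  intro P Q
  have key := Hent_submodular hμ (subfamily Z P) (subfamily Z Q) (subfamily Z (P ∩ Q))
  have hPQ : Hent μ (fun ω => (subfamily Z P ω, subfamily Z Q ω, subfamily Z (P ∩ Q) ω))
      = Hent μ (subfamily Z (P ∪ Q)) := by
    refine Hent_eq_of_eq_comp hμ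
      (f := fun v => (fun p => v ⟨p, mem_union_left _ p.2⟩, fun q => v ⟨q, mem_union_right _ q.2⟩,
        fun r => v ⟨r, mem_union_left _ (mem_of_mem_inter_left r.2)⟩))
      (g := fun w r => if hr : r.1 ∈ P then w.1 ⟨r, hr⟩
        else w.2.1 ⟨r, (mem_union.mp r.2).resolve_left hr⟩)
      (fun _ => rfl) fun ω => funext fun r => ?_
    by_cases hr : r.1 ∈ P <;> simp [subfamily, hr]
  have hP : Hent μ (fun ω => (subfamily Z P ω, subfamily Z (P ∩ Q) ω))
      = Hent μ (subfamily Z P) :=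
    Hent_eq_of_eq_comp hμ (f := fun v => (v, fun r => v ⟨r, mem_of_mem_inter_left r.2⟩))
      (g := Prod.fst) (fun _ => rfl) fun _ => rfl
  have hQ : Hent μ (fun ω => (subfamily Z Q ω, subfamily Z (P ∩ Q) ω))
      = Hent μ (subfamily Z Q) :=
    Hent_eq_of_eq_comp hμ (f := fun v => (v, fun r => v ⟨r, mem_of_mem_inter_right r.2⟩))
      (g := Prod.fst) (fun _ => rfl) fun _ => rfl
  rwa [hPQ, hP, hQ] at key

end Subfamily

namespace IsSubmodular

variable {α : Type*} [DecidableEq α] {h : Finset α → ℝ}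

lemma add_le_add_of_subset (hsub : IsSubmodular h) (hmono : Monotone h) (A : Finset α)
    {S S' : Finset α} (hS : S ⊆ S') : h (A ∪ S') + h S ≤ h (A ∪ S) + h S' := by
  have h1 := hsub (A ∪ S) S'
  rw [union_assoc, union_eq_right.mpr hS] at h1
  have h2 : h S ≤ h ((A ∪ S) ∩ S') := hmono (subset_inter subset_union_right hS)
  linarith

lemma union_le_of_forall_exists_insert_le (hsub : IsSubmodular h) (hmono : Monotone h)
    {D : Finset α} (E : Finset α) (hE : ∀ x ∈ E, ∃ S ⊆ D, h (insert x S) ≤ h S) :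
    h (E ∪ D) ≤ h D := by
  induction E using Finset.induction_on with
  | empty => simp
  | insert x E _ ih =>
    obtain ⟨S, hSD, hS⟩ := hE x (mem_insert_self x E)
    have key := hsub.add_le_add_of_subset hmono {x} (hSD.trans subset_union_right : S ⊆ E ∪ D)
    rw [← insert_eq, ← insert_eq, ← insert_union] at key
    linarith [ih fun y hy => hE y (mem_insert_of_mem hy)]

lemma add_sum_le_add_sum {β : Type*} [DecidableEq β] (hsub : IsSubmodular h) (hmono : Monotone h)
    (W : Finset β) {A B : β → Finset α} (hAB : ∀ k ∈ W, A k ⊆ B k) (C : Finset α) :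
    h (W.biUnion B ∪ C) + ∑ k ∈ W, h (A k) ≤ h (W.biUnion A ∪ C) + ∑ k ∈ W, h (B k) := by
  induction W using Finset.induction_on generalizing C with
  | empty => simp
  | insert k W hk ih =>
    have hABk := hAB k (mem_insert_self k W)
    have h1 := hsub.add_le_add_of_subset hmono (B k)
      (subset_union_left : A k ⊆ A k ∪ (W.biUnion B ∪ C))
    rw [← union_assoc, union_eq_left.mpr hABk, union_left_comm (A k)] at h1
    have h2 := ih (fun j hj => hAB j (mem_insert_of_mem hj)) (A k ∪ C)
    rw [union_left_comm (W.biUnion A)] at h2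
    rw [sum_insert hk, sum_insert hk, biUnion_insert, biUnion_insert, union_assoc, union_assoc]
    linarith

lemma prod_add_sum_le_add_sum {ι κ : Type*} [DecidableEq ι] [DecidableEq κ]
    {h : Finset (ι × κ) → ℝ} (hsub : IsSubmodular h) (hmono : Monotone h)
    {s t : Finset ι} (hst : s ⊆ t) (U : Finset κ) :
    h (t ×ˢ U) + ∑ k ∈ U, h (s ×ˢ {k}) ≤ h (s ×ˢ U) + ∑ k ∈ U, h (t ×ˢ {k}) := by
  have hbiUnion : ∀ r : Finset ι, U.biUnion (fun k => r ×ˢ {k}) = r ×ˢ U := fun r => by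
    ext ⟨a, b⟩
    simp [and_comm]
  have key := hsub.add_sum_le_add_sum hmono U (A := fun k => s ×ˢ {k}) (B := fun k => t ×ˢ {k})
    (fun k _ => product_subset_product_left hst) ∅
  rwa [hbiUnion, hbiUnion, union_empty, union_empty] at key

end IsSubmodular

lemma card_mul_le_card_sub_one_mul_sum {β : Type*} [DecidableEq β] {U : Finset β}
    {f : β → ℝ} {x : ℝ} (hx : ∀ k ∈ U, x ≤ ∑ j ∈ U.erase k, f j) :
    (#U : ℝ) * x ≤ (#U - 1) * ∑ k ∈ U, f k := by
  calc (#U : ℝ) * x = ∑ k ∈ U, x := by rw [sum_const, nsmul_eq_mul]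
    _ ≤ ∑ k ∈ U, (∑ j ∈ U, f j - f k) :=
        sum_le_sum fun k hk => (hx k hk).trans_eq (sum_erase_eq_sub hk)
    _ = (#U - 1) * ∑ k ∈ U, f k := by
        rw [sum_sub_distrib, sum_const, nsmul_eq_mul]
        ring

def levels (K m : ℕ) : Finset (Fin K) := {i | (i : ℕ) ≤ m}

lemma mem_levels {K m : ℕ} {i : Fin K} : i ∈ levels K m ↔ (i : ℕ) ≤ m := by simp [levels]

lemma levels_mono {K : ℕ} : Monotone (levels K) :=
  fun _ _ hmn _ hi => mem_levels.mpr ((mem_levels.mp hi).trans hmn)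

/-- Level `i : Fin K` is the paper's level `i + 1`, so `levels K m` holds the paper's levels
`1, …, m + 1`. -/
def HasMDSLevels {κ : Type*} {K : ℕ} (h : Finset (Fin K × κ) → ℝ) (L : ℝ) : Prop :=
  ∀ (i : Fin K) (U : Finset κ), h ({i} ×ˢ U) = (min #U (i + 1) : ℕ) * L

namespace HasMDSLevels

variable {κ : Type*} {K : ℕ} {h : Finset (Fin K × κ) → ℝ} {L : ℝ}

lemma le_levels_prod (hmds : HasMDSLevels h L) (hmono : Monotone h) {m : ℕ} (hm : m < K)
    {U : Finset κ} (hU : m + 1 ≤ #U) : (m + 1) * L ≤ h (levels K m ×ˢ U) := by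
  have hsub : {(⟨m, hm⟩ : Fin K)} ×ˢ U ⊆ levels K m ×ˢ U :=
    product_subset_product_left (singleton_subset_iff.mpr (mem_levels.mpr le_rfl))
  have key := hmono hsub
  rw [hmds, min_eq_right hU] at key
  exact_mod_cast key

variable [DecidableEq κ]

lemma levels_prod_le_erase (hmds : HasMDSLevels h L) (hsub : IsSubmodular h) (hmono : Monotone h)
    {m : ℕ} {U : Finset κ} {k : κ} (hk : k ∈ U) (hU : m + 1 < #U) :
    h (levels K m ×ˢ U) ≤ h (levels K m ×ˢ U.erase k) := by
  have hsplit : levels K m ×ˢ U = levels K m ×ˢ {k} ∪ levels K m ×ˢ U.erase k := by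
    rw [← product_union, ← insert_eq, insert_erase hk]
  rw [hsplit]
  refine hsub.union_le_of_forall_exists_insert_le hmono _ fun ⟨i, j⟩ hx => ?_
  obtain ⟨hi, rfl⟩ : i ∈ levels K m ∧ k = j := by simpa using hx
  refine ⟨{i} ×ˢ U.erase k, product_subset_product_left (singleton_subset_iff.mpr hi), ?_⟩
  have hins : insert (i, k) ({i} ×ˢ U.erase k) = {i} ×ˢ U := by
    rw [insert_eq, ← singleton_product_singleton, ← product_union, ← insert_eq, insert_erase hk]
  have hi' := mem_levels.mp hi
  have hcard := card_erase_of_mem hk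
  rw [hins, hmds, hmds, min_eq_right (by omega), min_eq_right (by omega)]

lemma levels_prod_add_le_sum (hmds : HasMDSLevels h L) (hsub : IsSubmodular h)
    (hmono : Monotone h) : ∀ {m : ℕ}, m < K → ∀ {U : Finset κ}, #U = m + 1 →
      h (levels K m ×ˢ U) + (m + 1) * (harmonic (m + 1) - 1) * L
        ≤ ∑ k ∈ U, h (levels K m ×ˢ {k})
  | 0, _, U, hU => by
    obtain ⟨k, rfl⟩ := card_eq_one.mp hU
    simp
  | m + 1, hm, U, hU => by
    have hhan : (#U : ℝ) * (h (levels K m ×ˢ U) + (m + 1) * (harmonic (m + 1) - 1) * L)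
        ≤ (#U - 1) * ∑ k ∈ U, h (levels K m ×ˢ {k}) := by
      refine card_mul_le_card_sub_one_mul_sum fun k hk => ?_
      have hredundant := hmds.levels_prod_le_erase hsub hmono hk (by omega : m + 1 < #U)
      have ih := levels_prod_add_le_sum hmds hsub hmono (by omega : m < K)
        (by rw [card_erase_of_mem hk, hU]; rfl : #(U.erase k) = m + 1)
      linarith
    have hfloor := hmds.le_levels_prod hmono (by omega : m < K) (by omega : m + 1 ≤ #U)
    have hinc := hsub.prod_add_sum_le_add_sum hmono (levels_mono m.le_succ) U
    rw [hU] at hhan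
    push_cast at hhan ⊢
    have hexcess : (m + 2) * (harmonic (m + 1) - 1) * L + L
        ≤ ∑ k ∈ U, h (levels K m ×ˢ {k}) - h (levels K m ×ˢ U) := by
      refine le_of_mul_le_mul_left ?_ (by positivity : (0 : ℝ) < m + 1)
      linarith
    have hH : ((m : ℝ) + 1 + 1) * (harmonic (m + 1 + 1) - 1)
        = (m + 2) * (harmonic (m + 1) - 1) + 1 := by
      rw [harmonic_succ]
      push_cast
      field_simp
      ring
    rw [hH]
    linarith

lemma harmonic_mul_le_sum (hmds : HasMDSLevels h L) (hsub : IsSubmodular h) (hmono : Monotone h)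
    {m : ℕ} (hm : m < K) {U : Finset κ} (hU : #U = m + 1) :
    (m + 1) * harmonic (m + 1) * L ≤ ∑ k ∈ U, h (levels K m ×ˢ {k}) := by
  have := hmds.levels_prod_add_le_sum hsub hmono hm hU
  have := hmds.le_levels_prod hmono hm hU.ge
  linarith

end HasMDSLevels

section Reindexing

variable {Ω T : Type*} [Fintype Ω] [Fintype T] {μ : Ω → ℝ}

lemma Hent_subfamily_singleton_prod {ι κ : Type*} [DecidableEq ι] [DecidableEq κ]
    (hμ : ∀ ω, 0 ≤ μ ω) (Z : ι → κ → Ω → T) (i : ι) (U : Finset κ) :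
    Hent μ (subfamily (Function.uncurry Z) ({i} ×ˢ U)) = Hent μ (fun ω (u : U) => Z i u ω) := by
  refine Hent_eq_of_eq_comp hμ (f := fun v p => v ⟨p.1.2, (mem_product.mp p.2).2⟩)
    (g := fun w u => w ⟨(i, u), mem_product.mpr ⟨mem_singleton_self i, u.2⟩⟩)
    (fun ω => funext fun p => ?_) fun _ => rfl
  obtain ⟨⟨j, u⟩, hp⟩ := p
  obtain rfl : j = i := mem_singleton.mp (mem_product.mp hp).1
  rfl

lemma Hent_Zle {K : ℕ} (hμ : ∀ ω, 0 ≤ μ ω) (ZM : Fin K → Fin K → Ω → T) (n k : Fin K) :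
    Hent μ (Zle ZM n k) = Hent μ (subfamily (Function.uncurry ZM) (levels K n ×ˢ {k})) := by
  refine Hent_eq_of_eq_comp hμ
    (f := fun v m => v ⟨(Fin.castLE n.isLt m, k),
      mem_product.mpr ⟨mem_levels.mpr (Nat.lt_succ_iff.mp m.isLt), mem_singleton_self k⟩⟩)
    (g := fun w p => w ⟨p.1.1, Nat.lt_succ_of_le (mem_levels.mp (mem_product.mp p.2).1)⟩)
    (fun _ => rfl) fun ω => funext fun p => ?_
  obtain ⟨⟨i, j⟩, hp⟩ := p
  obtain rfl : j = k := mem_singleton.mp (mem_product.mp hp).2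
  rfl

end Reindexing

theorem mds_recursive_entropy_bound_general
    (K : ℕ) (L : ℝ)
    (Ω : Type) [Fintype Ω] (μ : Ω → ℝ)
    (hμ0 : ∀ ω, 0 ≤ μ ω)
    (T : Type) [Fintype T]
    (ZM : Fin K → Fin K → Ω → T)
    -- for every n, (Z_1^n, …, Z_K^n) is (K,n)-MDS with symbol size L
    (hMDS : ∀ (n : Fin K) (U : Finset (Fin K)),
      Hent μ (fun ω (u : ↥U) => ZM n u.1 ω) = (min U.card (n.1 + 1) : ℕ) * L) :
    ∀ (n : Fin K) (U : Finset (Fin K)), U.card = n.1 + 1 →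
      (1 / ((n.1 : ℝ) + 1)) * ∑ k ∈ U, Hent μ (Zle ZM n k)
        ≥ (∑ i ∈ Finset.range (n.1 + 1), 1 / ((i : ℝ) + 1)) * L := by
  intro n U hU
  have hmds : HasMDSLevels (fun P => Hent μ (subfamily (Function.uncurry ZM) P)) L :=
    fun i V => (Hent_subfamily_singleton_prod hμ0 ZM i V).trans (hMDS i V)
  have key := hmds.harmonic_mul_le_sum (Hent_subfamily_submodular hμ0 _)
    (Hent_subfamily_mono hμ0 _) n.isLt hU
  have hharmonic : (harmonic (n + 1) : ℝ) = ∑ i ∈ range (n + 1), 1 / ((i : ℝ) + 1) := by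
    simp [harmonic]
  simp only [← Hent_Zle hμ0, hharmonic] at key
  rw [ge_iff_le, one_div_mul_eq_div, le_div_iff₀ (by positivity)]
  linarith

/-- Lemma 3: for MDS variables, for every `n` and every `U ⊆ [K]` with `|U| = n`,
(1/n) Σ_{k∈U} H(Z_k^{≤n}) ≥ (1 + 1/2 + ⋯ + 1/n)·L. -/
theorem mds_recursive_entropy_bound
    (K : ℕ) (hK : 1 ≤ K) (L : ℝ) (hL : 0 < L)
    (Ω : Type) [Fintype Ω] (μ : Ω → ℝ)
    (hμ0 : ∀ ω, 0 ≤ μ ω) (hμ1 : (∑ ω, μ ω) = 1)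
    (T : Type) [Fintype T]
    (ZM : Fin K → Fin K → Ω → T)
    -- for every n, (Z_1^n, …, Z_K^n) is (K,n)-MDS with symbol size L
    (hMDS : ∀ (n : Fin K) (U : Finset (Fin K)),
      Hent μ (fun ω (u : ↥U) => ZM n u.1 ω) = (min U.card (n.1 + 1) : ℕ) * L) :
    ∀ (n : Fin K) (U : Finset (Fin K)), U.card = n.1 + 1 →
      (1 / ((n.1 : ℝ) + 1)) * ∑ k ∈ U, Hent μ (Zle ZM n k)
        ≥ (∑ i ∈ Finset.range (n.1 + 1), 1 / ((i : ℝ) + 1)) * L :=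
  mds_recursive_entropy_bound_general K L Ω μ hμ0 T ZM hMDS
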